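/- Let k \geq 3, n - k \geq 1, and G = L(S(CS_{k,n-k})). Then the second Zagreb index of G is M_2(G) = \frac{1}{2}\left( n^4 + (7-4k)n^3 + (6k^2 - 21k + 20)n^2 - (4k^3 - 21k^2 + 40k - 32)n + k^4 - 7k^3 + 20k^2 - 16k \right). -/

import Mathlib

open scoped Classical
open Finset

noncomputable section

namespace Zagreb

variable {V : Type*}

/-- First Zagreb index. -/
def M1 (G : SimpleGraph V) [Fintype V] : ℕ :=
  ∑ v, (G.degree v) ^ 2

/-- Second Zagreb index. -/
def M2 (G : SimpleGraph V) [Fintype V] : ℕ :=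
  ∑ e ∈ G.edgeFinset,
    Sym2.lift ⟨fun u v => G.degree u * G.degree v, fun _ _ => mul_comm _ _⟩ e

/-- First Zagreb coindex: sum over unordered pairs of distinct non-adjacent vertices. -/
def M1bar (G : SimpleGraph V) [Fintype V] : ℕ :=
  ∑ e ∈ Gᶜ.edgeFinset,
    Sym2.lift ⟨fun u v => G.degree u + G.degree v, fun _ _ => add_comm _ _⟩ e

/-- Second Zagreb coindex. -/
def M2bar (G : SimpleGraph V) [Fintype V] : ℕ :=
  ∑ e ∈ Gᶜ.edgeFinset,
    Sym2.lift ⟨fun u v => G.degree u * G.degree v, fun _ _ => mul_comm _ _⟩ e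

/-- The cycle-star graph: a cycle of length `k` together with `l` leaves
attached to the cycle vertex `0`. -/
def cycleStar (k l : ℕ) : SimpleGraph (Fin k ⊕ Fin l) where
  Adj x y :=
    match x, y with
    | Sum.inl i, Sum.inl j => i ≠ j ∧ ((i.val + 1) % k = j.val ∨ (j.val + 1) % k = i.val)
    | Sum.inl i, Sum.inr _ => i.val = 0
    | Sum.inr _, Sum.inl i => i.val = 0
    | Sum.inr _, Sum.inr _ => False
  symm := by
    constructor
    rintro (i | a) (j | b) h
    · exact ⟨Ne.symm h.1, h.2.symm⟩
    · exact h
    · exact h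
    · exact h
  loopless := by
    constructor
    rintro (i | a) h
    · exact h.1 rfl
    · exact h

/-- The subdivision graph: each edge is replaced by a path of length 2. -/
def subdivision (G : SimpleGraph V) : SimpleGraph (V ⊕ G.edgeSet) where
  Adj x y :=
    match x, y with
    | Sum.inl v, Sum.inr e => v ∈ (e : Sym2 V)
    | Sum.inr e, Sum.inl v => v ∈ (e : Sym2 V)
    | _, _ => False
  symm := by constructor; rintro (v | e) (w | f) h <;> simp_all
  loopless := by constructor; rintro (v | e) h <;> simp_all

/-- The line graph of `G`. -/
def lineGraph (G : SimpleGraph V) : SimpleGraph G.edgeSet where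
  Adj e f := e ≠ f ∧ ∃ v, v ∈ (e : Sym2 V) ∧ v ∈ (f : Sym2 V)
  symm := by
    constructor
    rintro e f ⟨hne, v, hv1, hv2⟩
    exact ⟨hne.symm, v, hv2, hv1⟩
  loopless := by constructor; rintro e ⟨hne, _⟩; exact hne rfl

/-- A cut-vertex: a vertex of a connected graph whose removal disconnects it. -/
def IsCutVertex (G : SimpleGraph V) (v : V) : Prop :=
  G.Connected ∧ ¬ (G.induce {u | u ≠ v}).Connected

/-- The line cut-vertex graph of `G`: vertices are the edges and cut-vertices of `G`;
two vertices are adjacent iff the corresponding edges share an endpoint, or one is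
an edge incident to the other, a cut-vertex. -/
def lineCutGraph (G : SimpleGraph V) :
    SimpleGraph (G.edgeSet ⊕ {v : V // IsCutVertex G v}) where
  Adj x y :=
    match x, y with
    | Sum.inl e, Sum.inl f => e ≠ f ∧ ∃ v, v ∈ (e : Sym2 V) ∧ v ∈ (f : Sym2 V)
    | Sum.inl e, Sum.inr c => (c : V) ∈ (e : Sym2 V)
    | Sum.inr c, Sum.inl e => (c : V) ∈ (e : Sym2 V)
    | Sum.inr _, Sum.inr _ => False
  symm := by
    constructor
    rintro (e | c) (f | d) h
    · exact ⟨Ne.symm h.1, h.2.choose, h.2.choose_spec.2, h.2.choose_spec.1⟩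
    · exact h
    · exact h
    · exact h
  loopless := by
    constructor
    rintro (e | c) h
    · exact h.1 rfl
    · exact h

end Zagreb

/-!
The vertices of `L(S(G))` are the edges `v — e` of `S(G)`, i.e. the darts of `G`; two darts are
adjacent when they have the same tail or are reverses of each other, so the dart `(u, v)` has
degree `d(u)`. Each vertex `v` of `G` thus contributes a clique on `d(v)` darts of degree `d(v)`,
and each edge `uv` one more edge of weight `d(u) d(v)`:
`2 M₂(L(S(G))) = ∑ᵥ d(v)³ (d(v) - 1) + 2 M₂(G)`.
In `CS_{k,l}` the hub has degree `l + 2`, the other cycle vertices degree `2` and the leaves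
degree `1`, and `M₂(CS_{k,l}) = l (l + 2) + 4 l + 4 k`; it remains to put `l = n - k`.
-/

namespace SimpleGraph

variable {V : Type*}

theorem Dart.eq_of_fst_eq_of_edge_eq {G : SimpleGraph V} {d d' : G.Dart} (hfst : d.fst = d'.fst)
    (hedge : d.edge = d'.edge) : d = d' := by
  rcases (dart_edge_eq_iff d d').1 hedge with h | rfl
  · exact h
  · exact absurd hfst d'.snd_ne_fst

variable [Fintype V] (G : SimpleGraph V) [DecidableRel G.Adj]

theorem degree_eq_sum_ite (v : V) : G.degree v = ∑ w, if G.Adj v w then 1 else 0 := by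
  rw [← card_neighborFinset_eq_degree, neighborFinset_eq_filter, card_filter]

section DartSums

variable {M : Type*} [AddCommMonoid M]

theorem sum_darts_eq_sum_neighborFinset (f : V → V → M) :
    ∑ d : G.Dart, f d.fst d.snd = ∑ v, ∑ w ∈ G.neighborFinset v, f v w := by
  let e : G.Dart ≃ Σ v, G.neighborSet v :=
    ⟨fun d => ⟨d.fst, d.snd, d.adj⟩, fun p => ⟨(p.1, p.2), p.2.2⟩, fun _ => rfl, fun _ => rfl⟩
  refine (Fintype.sum_equiv e _ (fun p => f p.1 p.2) fun _ => rfl).trans ?_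
  rw [Fintype.sum_sigma]
  simp [neighborFinset, Finset.sum_set_coe]

theorem sum_darts_eq_sum_ite (f : V → V → M) :
    ∑ d : G.Dart, f d.fst d.snd = ∑ v, ∑ w, if G.Adj v w then f v w else 0 := by
  simp only [sum_darts_eq_sum_neighborFinset, neighborFinset_eq_filter, sum_filter]

theorem sum_darts_fst (f : V → M) : ∑ d : G.Dart, f d.fst = ∑ v, G.degree v • f v := by
  simp [sum_darts_eq_sum_neighborFinset G fun v _ => f v]

theorem sum_darts_snd (f : V → M) : ∑ d : G.Dart, f d.snd = ∑ v, G.degree v • f v := by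
  rw [← sum_darts_fst]
  exact Fintype.sum_equiv (Function.Involutive.toPerm _ Dart.symm_involutive) _ _ fun _ => rfl

end DartSums

end SimpleGraph

namespace Zagreb

open SimpleGraph

variable {V W : Type*}

section M2

variable [Fintype V] (G : SimpleGraph V)

theorem two_mul_M2 : 2 * M2 G = ∑ d : G.Dart, G.degree d.fst * G.degree d.snd := by
  rw [M2, mul_sum, ← sum_fiberwise_of_maps_to (g := Dart.edge) (t := G.edgeFinset)
    fun d _ => by simp]
  refine sum_congr rfl fun e he => ?_
  have hfiber : ∀ d ∈ ({d : G.Dart | d.edge = e} : Finset _), G.degree d.fst * G.degree d.snd =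
      Sym2.lift ⟨fun u v => G.degree u * G.degree v, fun _ _ => mul_comm _ _⟩ e :=
    fun d hd => (mem_filter.1 hd).2 ▸ rfl
  rw [sum_congr rfl hfiber, sum_const, G.dart_edge_fiber_card e (mem_edgeFinset.1 he),
    smul_eq_mul]

theorem two_mul_M2_eq_sum_ite :
    2 * M2 G = ∑ v, ∑ w, if G.Adj v w then G.degree v * G.degree w else 0 := by
  rw [two_mul_M2, sum_darts_eq_sum_ite G fun v w => G.degree v * G.degree w]

theorem M2_eq_of_iso {H : SimpleGraph W} [Fintype W] (f : G ≃g H) : M2 G = M2 H := by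
  refine sum_nbij' (Sym2.map f) (Sym2.map f.symm) ?_ ?_ ?_ ?_ ?_
  · simp [f.map_mem_edgeSet_iff]
  · intro e he
    simpa [← f.symm.map_mem_edgeSet_iff] using he
  · intro e _
    simp [Sym2.map_map]
  · intro e _
    simp [Sym2.map_map]
  · intro e _
    induction e using Sym2.ind
    simp

end M2

section DartGraph

variable (G : SimpleGraph V)

def dartGraph : SimpleGraph G.Dart where
  Adj d d' := d ≠ d' ∧ (d.fst = d'.fst ∨ d.edge = d'.edge)
  symm := ⟨fun _ _ h => ⟨h.1.symm, h.2.imp Eq.symm Eq.symm⟩⟩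
  loopless := ⟨fun _ h => h.1 rfl⟩

def subdivisionEdgeOfDart (d : G.Dart) : (subdivision G).edgeSet :=
  ⟨s(.inl d.fst, .inr ⟨d.edge, d.edge_mem⟩), (subdivision G).mem_edgeSet.2 (Sym2.mem_mk_left _ _)⟩

variable {G}

theorem subdivisionEdgeOfDart_injective : Function.Injective (subdivisionEdgeOfDart G) := by
  intro d d' h
  have h := congrArg Subtype.val h
  simp only [subdivisionEdgeOfDart, Sym2.eq_iff, Sum.inl.injEq, Sum.inr.injEq, Subtype.mk.injEq,
    reduceCtorEq, and_false, or_false] at h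
  exact Dart.eq_of_fst_eq_of_edge_eq h.1 h.2

theorem exists_subdivisionEdgeOfDart {v : V} {e : G.edgeSet} (hv : v ∈ (e : Sym2 V)) :
    ∃ d, subdivisionEdgeOfDart G d = ⟨s(.inl v, .inr e), hv⟩ := by
  obtain ⟨e, he⟩ := e
  obtain ⟨w, rfl⟩ := Sym2.mem_iff_exists.1 hv
  exact ⟨⟨(v, w), he⟩, rfl⟩

theorem subdivisionEdgeOfDart_surjective : Function.Surjective (subdivisionEdgeOfDart G) := by
  rintro ⟨e, he⟩
  induction e using Sym2.ind with | _ x y => ?_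
  rcases x with v | f <;> rcases y with w | g
  · exact absurd he (by simp [subdivision])
  · exact exists_subdivisionEdgeOfDart he
  · simp only [Sym2.eq_swap (a := Sum.inr f)]
    exact exists_subdivisionEdgeOfDart he
  · exact absurd he (by simp [subdivision])

theorem lineGraph_adj_subdivisionEdgeOfDart {d d' : G.Dart} :
    (lineGraph (subdivision G)).Adj (subdivisionEdgeOfDart G d) (subdivisionEdgeOfDart G d') ↔
      (dartGraph G).Adj d d' := by
  change _ ≠ _ ∧ _ ↔ _ ≠ _ ∧ _
  rw [subdivisionEdgeOfDart_injective.ne_iff]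
  simp [subdivisionEdgeOfDart]

variable (G) in
def dartGraphIsoLineGraphSubdivision : dartGraph G ≃g lineGraph (subdivision G) where
  toEquiv := Equiv.ofBijective _
    ⟨subdivisionEdgeOfDart_injective, subdivisionEdgeOfDart_surjective⟩
  map_rel_iff' := lineGraph_adj_subdivisionEdgeOfDart

variable [Fintype V]

theorem neighborFinset_dartGraph (d : G.Dart) :
    (dartGraph G).neighborFinset d =
      insert d.symm (({d' : G.Dart | d'.fst = d.fst} : Finset _).erase d) := by
  ext d'
  rw [mem_neighborFinset]
  simp only [dartGraph, mem_insert, mem_erase, mem_filter, mem_univ, true_and, dart_edge_eq_iff]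
  grind [Dart.symm_symm, Dart.symm_ne]

theorem symm_notMem_erase_fst_fiber (d : G.Dart) :
    d.symm ∉ (({d' : G.Dart | d'.fst = d.fst} : Finset _).erase d) := by
  simp [d.snd_ne_fst]

theorem card_erase_fst_fiber (d : G.Dart) :
    #(({d' : G.Dart | d'.fst = d.fst} : Finset _).erase d) = G.degree d.fst - 1 := by
  rw [card_erase_of_mem (by simp)]
  exact congrArg (· - 1) (G.dart_fst_fiber_card_eq_degree d.fst)

theorem degree_dartGraph (d : G.Dart) : (dartGraph G).degree d = G.degree d.fst := by
  rw [← card_neighborFinset_eq_degree, neighborFinset_dartGraph,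
    card_insert_of_notMem (symm_notMem_erase_fst_fiber d), card_erase_fst_fiber]
  have := G.degree_pos_iff_exists_adj d.fst |>.2 ⟨_, d.adj⟩
  omega

theorem sum_degree_neighborFinset_dartGraph (d : G.Dart) :
    ∑ d' ∈ (dartGraph G).neighborFinset d, G.degree d'.fst =
      G.degree d.snd + (G.degree d.fst - 1) * G.degree d.fst := by
  rw [neighborFinset_dartGraph, sum_insert (symm_notMem_erase_fst_fiber d),
    sum_congr rfl fun d' hd' => by rw [(mem_filter.1 (mem_of_mem_erase hd')).2],
    sum_const, card_erase_fst_fiber, smul_eq_mul]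
  rfl

theorem two_mul_M2_dartGraph :
    2 * M2 (dartGraph G) = ∑ v, G.degree v ^ 3 * (G.degree v - 1) + 2 * M2 G := by
  rw [two_mul_M2, two_mul_M2, sum_darts_eq_sum_neighborFinset _
    fun d d' => (dartGraph G).degree d * (dartGraph G).degree d']
  simp_rw [degree_dartGraph, ← mul_sum, sum_degree_neighborFinset_dartGraph, mul_add,
    sum_add_distrib, sum_darts_fst G fun v => G.degree v * ((G.degree v - 1) * G.degree v)]
  rw [add_comm]
  congr 1
  refine sum_congr rfl fun v _ => ?_
  rw [smul_eq_mul]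
  ring

variable (G) in
theorem two_mul_M2_lineGraph_subdivision :
    2 * M2 (lineGraph (subdivision G)) = ∑ v, G.degree v ^ 3 * (G.degree v - 1) + 2 * M2 G := by
  rw [← M2_eq_of_iso _ (dartGraphIsoLineGraphSubdivision G), two_mul_M2_dartGraph]

end DartGraph

section CycleStar

variable {k l : ℕ}

theorem cycleStar_adj_inl_inl {i j : Fin k} :
    (cycleStar k l).Adj (.inl i) (.inl j) ↔ (cycleGraph k).Adj i j := by
  rcases k with _ | _ | n
  · exact i.elim0
  · simp [cycleStar, cycleGraph_one_adj, Fin.ext_iff, Fin.val_eq_zero]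
  · have succ_val (a b : Fin (n + 2)) : (a.val + 1) % (n + 2) = b.val ↔ b = a + 1 := by
      rw [Fin.ext_iff, Fin.val_add, Fin.val_one, eq_comm]
    rw [cycleGraph_adj, sub_eq_iff_eq_add', sub_eq_iff_eq_add']
    change i ≠ j ∧ _ ↔ _
    rw [succ_val, succ_val]
    constructor
    · exact fun h => h.2.symm
    · rintro (rfl | rfl) <;> simp

theorem cycleStar_adj_inl_inr [NeZero k] {i : Fin k} {a : Fin l} :
    (cycleStar k l).Adj (.inl i) (.inr a) ↔ i = 0 :=
  Fin.val_eq_zero_iff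

theorem cycleStar_adj_inr_inl [NeZero k] {i : Fin k} {a : Fin l} :
    (cycleStar k l).Adj (.inr a) (.inl i) ↔ i = 0 :=
  Fin.val_eq_zero_iff

theorem cycleStar_not_adj_inr_inr {a b : Fin l} : ¬ (cycleStar k l).Adj (.inr a) (.inr b) :=
  id

theorem degree_cycleStar_inl {m : ℕ} (i : Fin (m + 3)) :
    (cycleStar (m + 3) l).degree (.inl i) = 2 + if i = 0 then l else 0 := by
  rw [degree_eq_sum_ite, Fintype.sum_sum_type]
  simp only [cycleStar_adj_inl_inl, cycleStar_adj_inl_inr, ← degree_eq_sum_ite,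
    cycleGraph_degree_three_le]
  simp

theorem degree_cycleStar_inr [NeZero k] (a : Fin l) : (cycleStar k l).degree (.inr a) = 1 := by
  rw [degree_eq_sum_ite, Fintype.sum_sum_type]
  simp [cycleStar_adj_inr_inl, cycleStar_not_adj_inr_inr]

theorem sum_cycleGraph_adj_mul (m l : ℕ) :
    ∑ x : Fin (m + 3), ∑ y, (if (cycleGraph (m + 3)).Adj x y then
      (2 + if x = 0 then l else 0) * (2 + if y = 0 then l else 0) else 0) =
      8 * (m + 3) + 8 * l := by
  set C := cycleGraph (m + 3)
  set a : Fin (m + 3) → ℕ := fun x => if x = 0 then l else 0 with ha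
  rw [← sum_darts_eq_sum_ite C fun x y => (2 + a x) * (2 + a y)]
  -- `a` vanishes off the hub and the two ends of a dart differ, so `a d.fst * a d.snd = 0`.
  have hsplit (d : C.Dart) : (2 + a d.fst) * (2 + a d.snd) = 4 + 2 * a d.fst + 2 * a d.snd := by
    have := d.fst_ne_snd
    simp only [ha]
    split_ifs <;> simp_all <;> ring
  simp only [hsplit, sum_add_distrib, sum_darts_fst C fun v => 2 * a v,
    sum_darts_snd C fun v => 2 * a v]
  simp only [sum_const, card_univ, dart_card_eq_sum_degrees, cycleGraph_degree_three_le,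
    Fintype.card_fin, smul_eq_mul, ha, mul_ite, mul_zero, sum_ite_eq', mem_univ, ↓reduceIte, C]
  ring

theorem M2_cycleStar (m l : ℕ) :
    M2 (cycleStar (m + 3) l) = l * (l + 2) + 4 * l + 4 * (m + 3) := by
  have h : 2 * M2 (cycleStar (m + 3) l) = 2 * (l * (l + 2) + 4 * l + 4 * (m + 3)) := by
    rw [two_mul_M2_eq_sum_ite, Fintype.sum_sum_type]
    simp only [Fintype.sum_sum_type, cycleStar_adj_inl_inl, cycleStar_adj_inl_inr,
      cycleStar_adj_inr_inl, cycleStar_not_adj_inr_inr, degree_cycleStar_inl, degree_cycleStar_inr,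
      mul_one, one_mul, mul_zero, add_zero, sum_ite_irrel, sum_const, card_univ, Fintype.card_fin,
      smul_eq_mul, sum_ite_eq', mem_univ, ↓reduceIte]
    rw [sum_add_distrib, sum_cycleGraph_adj_mul]
    simp only [sum_ite_eq', mem_univ, ↓reduceIte]
    ring
  omega

theorem sum_degree_pow_three_mul_cycleStar (m l : ℕ) :
    ∑ v, (cycleStar (m + 3) l).degree v ^ 3 * ((cycleStar (m + 3) l).degree v - 1) =
      (l + 2) ^ 3 * (l + 1) + 8 * (m + 2) := by
  simp only [Fintype.sum_sum_type, degree_cycleStar_inl, Nat.succ_add_sub_one, Fin.sum_univ_succ,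
    ↓reduceIte, Fin.succ_ne_zero, add_zero, Nat.reducePow, mul_one, sum_const, card_univ,
    Fintype.card_fin, smul_eq_mul, degree_cycleStar_inr, one_pow, tsub_self, mul_zero]
  ring

end CycleStar

end Zagreb

open Zagreb in
theorem stmt7 (n k : ℕ) (hk : 3 ≤ k) (hn : k + 1 ≤ n) :
    (M2 (lineGraph (subdivision (cycleStar k (n - k)))) : ℚ) =
      (1 / 2) * ((n : ℚ) ^ 4 + (7 - 4 * k) * n ^ 3 + (6 * k ^ 2 - 21 * k + 20) * n ^ 2
        - (4 * (k : ℚ) ^ 3 - 21 * k ^ 2 + 40 * k - 32) * n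
        + (k : ℚ) ^ 4 - 7 * k ^ 3 + 20 * k ^ 2 - 16 * k) := by
  obtain ⟨m, rfl⟩ : ∃ m, k = m + 3 := ⟨k - 3, by omega⟩
  obtain ⟨l, rfl⟩ : ∃ l, n = m + 3 + l := ⟨n - (m + 3), by omega⟩
  have h := two_mul_M2_lineGraph_subdivision (cycleStar (m + 3) l)
  rw [sum_degree_pow_three_mul_cycleStar, M2_cycleStar] at h
  have hq : (2 : ℚ) * M2 (lineGraph (subdivision (cycleStar (m + 3) l))) =
      (l + 2) ^ 3 * (l + 1) + 8 * (m + 2) + 2 * (l * (l + 2) + 4 * l + 4 * (m + 3)) := by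
    exact_mod_cast h
  rw [Nat.add_sub_cancel_left]
  push_cast
  linear_combination hq / 2
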